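/- arXiv:2201.05631 — 3 statements merged into one kernel-verified Lean document; each statement's English description precedes it below -/
import Mathlib

section
/- If A', B', C' are the tangency points of a conic inscribed in triangle ABC (on sides BC, CA, AB respectively), then the lines AA', BB', CC' are concurrent. -/
/- If A', B', C' are the tangency points of a conic inscribed in triangle ABC
(on sides BC, CA, AB respectively), then the lines AA', BB', CC' are concurrent. -/

noncomputable section

abbrev Pt := EuclideanSpace ℝ (Fin 2)

/-- An ellipse: the image of the unit circle under an invertible affine map. -/
def IsEllipse (E : Set Pt) : Prop :=
  ∃ T : Pt ≃ᵃ[ℝ] Pt, E = T '' Metric.sphere (0 : Pt) 1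

/-- The line `L` (through `X` and `Y`) is tangent to `E` at `p`:
it meets `E` exactly at `p`. -/
def TangentAt (X Y : Pt) (E : Set Pt) (p : Pt) : Prop :=
  (affineSpan ℝ ({X, Y} : Set Pt) : Set Pt) ∩ E = {p}

open RealInnerProductSpace


lemma mem_line_iff {X Y Z : Pt} :
    Z ∈ line[ℝ, X, Y] ↔ ∃ r : ℝ, Z = X + r • (Y - X) := by
  have h := vadd_left_mem_affineSpan_pair (k := ℝ) (p₁ := X) (p₂ := Y) (v := Z - X)
  simp only [vsub_eq_sub, vadd_eq_add, sub_add_cancel] at h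
  rw [h]
  constructor
  · rintro ⟨r, hr⟩; exact ⟨r, by rw [hr]; abel⟩
  · rintro ⟨r, hr⟩; exact ⟨r, by rw [hr]; abel⟩

lemma tangent_sq {X Y p : Pt} (hXY : X ≠ Y)
    (h : (affineSpan ℝ ({X, Y} : Set Pt) : Set Pt) ∩ Metric.sphere (0 : Pt) 1 = {p}) :
    ‖p‖ = 1 ∧ ∀ Z ∈ affineSpan ℝ ({X, Y} : Set Pt), ‖Z - p‖ ^ 2 = ‖Z‖ ^ 2 - 1 := by
  have hp : p ∈ (affineSpan ℝ ({X, Y} : Set Pt) : Set Pt) ∩ Metric.sphere (0 : Pt) 1 := by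
    rw [h]; rfl
  obtain ⟨hpl, hps⟩ := hp
  have hpn : ‖p‖ = 1 := by simpa using hps
  set d : Pt := Y - X with hd_def
  have hd : d ≠ 0 := sub_ne_zero.mpr (Ne.symm hXY)
  have hdn : (0:ℝ) < ‖d‖ ^ 2 := by
    have : 0 < ‖d‖ := norm_pos_iff.mpr hd
    positivity
  obtain ⟨s, hs⟩ := mem_line_iff.mp hpl
  set t : ℝ := ⟪p, d⟫ / ‖d‖ ^ 2 with ht_def
  have htd : t * ‖d‖ ^ 2 = ⟪p, d⟫ := by
    rw [ht_def, div_mul_cancel₀]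
    exact ne_of_gt hdn
  have horth : ⟪p, d⟫ = 0 := by
    set q : Pt := p - (2 * t) • d with hq_def
    have hql : q ∈ affineSpan ℝ ({X, Y} : Set Pt) := by
      apply mem_line_iff.mpr
      exact ⟨s - 2 * t, by rw [hq_def, hs, sub_smul]; abel⟩
    have hqn : ‖q‖ = 1 := by
      have h1 : ‖q‖ ^ 2 = ‖p‖ ^ 2 - 2 * (2 * t * ⟪p, d⟫) + (2 * t) ^ 2 * ‖d‖ ^ 2 := by
        rw [hq_def, norm_sub_sq_real, real_inner_smul_right, norm_smul, mul_pow]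
        simp only [Real.norm_eq_abs, sq_abs]
      have h2 : ‖q‖ ^ 2 = 1 := by
        have hx : (2 * t) ^ 2 * ‖d‖ ^ 2 = 2 * (2 * t * ⟪p, d⟫) := by rw [← htd]; ring
        rw [h1, hpn, hx]; ring
      nlinarith [norm_nonneg q]
    have hq : q = p := by
      have : q ∈ ({p} : Set Pt) := by rw [← h]; exact ⟨hql, by simpa using hqn⟩
      exact this
    have h3 : (2 * t) • d = 0 := by
      have : p - (2 * t) • d = p := by rw [← hq_def, hq]
      have := sub_eq_self.mp this
      exact this
    have ht0 : t = 0 := by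
      rcases smul_eq_zero.mp h3 with h4 | h4
      · linarith
      · exact absurd h4 hd
    rw [← htd, ht0, zero_mul]
  refine ⟨hpn, fun Z hZ => ?_⟩
  obtain ⟨u, hu⟩ := mem_line_iff.mp hZ
  have hZp : Z - p = (u - s) • d := by rw [hu, hs, sub_smul]; abel
  have hip : ⟪Z - p, p⟫ = 0 := by
    rw [hZp, real_inner_smul_left, real_inner_comm, horth, mul_zero]
  have hexp : ‖Z‖ ^ 2 = ‖Z - p‖ ^ 2 + 2 * ⟪Z - p, p⟫ + ‖p‖ ^ 2 := by
    have := norm_add_sq_real (Z - p) p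
    simpa using this
  rw [hip, hpn] at hexp
  linarith

lemma norm_eq_of_sq_eq {u v : ℝ} (hu : 0 ≤ u) (hv : 0 ≤ v) (h : u ^ 2 = v ^ 2) : u = v := by
  have h2 : (u - v) * (u + v) = 0 := by linear_combination h
  rcases mul_eq_zero.mp h2 with h3 | h3
  · linarith
  · have hu0 : u = 0 := by linarith
    have hv0 : v = 0 := by linarith
    rw [hu0, hv0]

lemma cev (u v d : ℝ) (hu : 0 < u) (hv : 0 < v) (hd : 0 < d) (huv : u + v = 1) (b c : Pt) :
    (1 / (v * d) + 1 / (u * d)) • (u • b + v • c) = (1 / (v * d)) • b + (1 / (u * d)) • c := by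
  rw [smul_add, smul_smul, smul_smul]
  have h1 : (1 / (v * d) + 1 / (u * d)) * u = 1 / (v * d) := by
    field_simp
    linear_combination huv
  have h2 : (1 / (v * d) + 1 / (u * d)) * v = 1 / (u * d) := by
    field_simp
    linear_combination huv
  rw [h1, h2]

lemma cev2 (w1 w2 w3 : ℝ) (h1 : 0 < w1) (h2 : 0 < w2) (h3 : 0 < w3)
    (a a' b c : Pt) (hkey : (w2 + w3) • a' = w2 • b + w3 • c) :
    (w1 + w2 + w3)⁻¹ • (w1 • a + w2 • b + w3 • c) ∈ line[ℝ, a, a'] := by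
  have hs : w1 + w2 + w3 ≠ 0 := by positivity
  refine mem_line_iff.mpr ⟨(w2 + w3) / (w1 + w2 + w3), ?_⟩
  rw [show w1 • a + w2 • b + w3 • c = w1 • a + (w2 + w3) • a' by rw [hkey]; abel]
  match_scalars <;> field_simp <;> ring

lemma collin_of_mem (A A' P : Pt) (h : P ∈ line[ℝ, A, A']) :
    Collinear ℝ ({A, A', P} : Set Pt) := by
  have hc := collinear_insert_of_mem_affineSpan_pair h
  have hset : ({A, A', P} : Set Pt) = {P, A, A'} := by ext x; simp; tauto
  rwa [hset]

lemma map_line (T : Pt ≃ᵃ[ℝ] Pt) {p q r : Pt} (h : r ∈ line[ℝ, p, q]) :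
    T r ∈ line[ℝ, T p, T q] := by
  obtain ⟨t, ht⟩ := mem_line_iff.mp h
  have hr : r = AffineMap.lineMap p q t := by
    rw [AffineMap.lineMap_apply_module', ht]; abel
  have h2 := T.toAffineMap.apply_lineMap p q t
  rw [AffineEquiv.coe_toAffineMap] at h2
  rw [hr, h2]
  exact AffineMap.lineMap_mem_affineSpan_pair t _ _

lemma circle_case (a b c a' b' c' : Pt) (hbc : b ≠ c) (hca : c ≠ a) (hab : a ≠ b)
    (ht1 : (affineSpan ℝ ({b, c} : Set Pt) : Set Pt) ∩ Metric.sphere (0 : Pt) 1 = {a'})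
    (ht2 : (affineSpan ℝ ({c, a} : Set Pt) : Set Pt) ∩ Metric.sphere (0 : Pt) 1 = {b'})
    (ht3 : (affineSpan ℝ ({a, b} : Set Pt) : Set Pt) ∩ Metric.sphere (0 : Pt) 1 = {c'})
    (ha' : a' ∈ openSegment ℝ b c) (hb' : b' ∈ openSegment ℝ c a)
    (hc' : c' ∈ openSegment ℝ a b) :
    ∃ P : Pt, P ∈ line[ℝ, a, a'] ∧ P ∈ line[ℝ, b, b'] ∧ P ∈ line[ℝ, c, c'] := by
  obtain ⟨-, hfa⟩ := tangent_sq hbc ht1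
  obtain ⟨-, hfb⟩ := tangent_sq hca ht2
  obtain ⟨-, hfc⟩ := tangent_sq hab ht3
  obtain ⟨u₁, v₁, hu₁, hv₁, huv₁, heq₁⟩ := ha'
  obtain ⟨u₂, v₂, hu₂, hv₂, huv₂, heq₂⟩ := hb'
  obtain ⟨u₃, v₃, hu₃, hv₃, huv₃, heq₃⟩ := hc'
  have hdbc : (0 : ℝ) < ‖b - c‖ := by rw [norm_pos_iff, sub_ne_zero]; exact hbc
  have hdca : (0 : ℝ) < ‖c - a‖ := by rw [norm_pos_iff, sub_ne_zero]; exact hca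
  have hdab : (0 : ℝ) < ‖a - b‖ := by rw [norm_pos_iff, sub_ne_zero]; exact hab
  -- distances along the sides
  have hy1 : ‖b - a'‖ = v₁ * ‖b - c‖ := by
    have hvec : b - a' = v₁ • (b - c) := by
      rw [← heq₁, show u₁ = 1 - v₁ by linarith, smul_sub, sub_smul, one_smul]; abel
    rw [hvec, norm_smul, Real.norm_eq_abs, abs_of_pos hv₁]
  have hz1 : ‖c - a'‖ = u₁ * ‖b - c‖ := by
    have hvec : c - a' = u₁ • (c - b) := by
      rw [← heq₁, show v₁ = 1 - u₁ by linarith, smul_sub, sub_smul, one_smul]; abel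
    rw [hvec, norm_smul, Real.norm_eq_abs, abs_of_pos hu₁, norm_sub_rev]
  have hz2 : ‖c - b'‖ = v₂ * ‖c - a‖ := by
    have hvec : c - b' = v₂ • (c - a) := by
      rw [← heq₂, show u₂ = 1 - v₂ by linarith, smul_sub, sub_smul, one_smul]; abel
    rw [hvec, norm_smul, Real.norm_eq_abs, abs_of_pos hv₂]
  have hx2 : ‖a - b'‖ = u₂ * ‖c - a‖ := by
    have hvec : a - b' = u₂ • (a - c) := by
      rw [← heq₂, show v₂ = 1 - u₂ by linarith, smul_sub, sub_smul, one_smul]; abel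
    rw [hvec, norm_smul, Real.norm_eq_abs, abs_of_pos hu₂, norm_sub_rev]
  have hx3 : ‖a - c'‖ = v₃ * ‖a - b‖ := by
    have hvec : a - c' = v₃ • (a - b) := by
      rw [← heq₃, show u₃ = 1 - v₃ by linarith, smul_sub, sub_smul, one_smul]; abel
    rw [hvec, norm_smul, Real.norm_eq_abs, abs_of_pos hv₃]
  have hy3 : ‖b - c'‖ = u₃ * ‖a - b‖ := by
    have hvec : b - c' = u₃ • (b - a) := by
      rw [← heq₃, show v₃ = 1 - u₃ by linarith, smul_sub, sub_smul, one_smul]; abel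
    rw [hvec, norm_smul, Real.norm_eq_abs, abs_of_pos hu₃, norm_sub_rev]
  -- equal tangent lengths
  have e1 : ‖b - c'‖ = ‖b - a'‖ :=
    norm_eq_of_sq_eq (norm_nonneg _) (norm_nonneg _)
      (by rw [hfc b (right_mem_affineSpan_pair ℝ _ _), hfa b (left_mem_affineSpan_pair ℝ _ _)])
  have e2 : ‖c - a'‖ = ‖c - b'‖ :=
    norm_eq_of_sq_eq (norm_nonneg _) (norm_nonneg _)
      (by rw [hfa c (right_mem_affineSpan_pair ℝ _ _), hfb c (left_mem_affineSpan_pair ℝ _ _)])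
  have e3 : ‖a - b'‖ = ‖a - c'‖ :=
    norm_eq_of_sq_eq (norm_nonneg _) (norm_nonneg _)
      (by rw [hfb a (right_mem_affineSpan_pair ℝ _ _), hfc a (left_mem_affineSpan_pair ℝ _ _)])
  -- positivity of tangent lengths
  have hx : (0 : ℝ) < ‖a - b'‖ := by rw [hx2]; positivity
  have hy : (0 : ℝ) < ‖b - a'‖ := by rw [hy1]; positivity
  have hz : (0 : ℝ) < ‖c - a'‖ := by rw [hz1]; positivity
  have hx' : (0 : ℝ) < 1 / ‖a - b'‖ := by positivity
  have hy' : (0 : ℝ) < 1 / ‖b - a'‖ := by positivity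
  have hz' : (0 : ℝ) < 1 / ‖c - a'‖ := by positivity
  -- key barycentric identities
  have hkey1 : (1 / ‖b - a'‖ + 1 / ‖c - a'‖) • a'
      = (1 / ‖b - a'‖) • b + (1 / ‖c - a'‖) • c := by
    rw [hy1, hz1, ← heq₁]
    exact cev u₁ v₁ _ hu₁ hv₁ hdbc huv₁ _ _
  have hkey2 : (1 / ‖c - a'‖ + 1 / ‖a - b'‖) • b'
      = (1 / ‖c - a'‖) • c + (1 / ‖a - b'‖) • a := by
    rw [e2, hz2, hx2, ← heq₂]
    exact cev u₂ v₂ _ hu₂ hv₂ hdca huv₂ _ _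
  have hkey3 : (1 / ‖a - b'‖ + 1 / ‖b - a'‖) • c'
      = (1 / ‖a - b'‖) • a + (1 / ‖b - a'‖) • b := by
    rw [e3, ← e1, hx3, hy3, ← heq₃]
    exact cev u₃ v₃ _ hu₃ hv₃ hdab huv₃ _ _
  refine ⟨(1 / ‖a - b'‖ + 1 / ‖b - a'‖ + 1 / ‖c - a'‖)⁻¹ •
      ((1 / ‖a - b'‖) • a + (1 / ‖b - a'‖) • b + (1 / ‖c - a'‖) • c), ?_, ?_, ?_⟩
  · exact cev2 _ _ _ hx' hy' hz' a a' b c hkey1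
  · have h := cev2 (1 / ‖b - a'‖) (1 / ‖c - a'‖) (1 / ‖a - b'‖) hy' hz' hx' b b' c a hkey2
    have heqP : (1 / ‖a - b'‖ + 1 / ‖b - a'‖ + 1 / ‖c - a'‖)⁻¹ •
        ((1 / ‖a - b'‖) • a + (1 / ‖b - a'‖) • b + (1 / ‖c - a'‖) • c)
        = (1 / ‖b - a'‖ + 1 / ‖c - a'‖ + 1 / ‖a - b'‖)⁻¹ •
        ((1 / ‖b - a'‖) • b + (1 / ‖c - a'‖) • c + (1 / ‖a - b'‖) • a) := by
      congr 1
      · ring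
      · abel
    rw [heqP]; exact h
  · have h := cev2 (1 / ‖c - a'‖) (1 / ‖a - b'‖) (1 / ‖b - a'‖) hz' hx' hy' c c' a b hkey3
    have heqP : (1 / ‖a - b'‖ + 1 / ‖b - a'‖ + 1 / ‖c - a'‖)⁻¹ •
        ((1 / ‖a - b'‖) • a + (1 / ‖b - a'‖) • b + (1 / ‖c - a'‖) • c)
        = (1 / ‖c - a'‖ + 1 / ‖a - b'‖ + 1 / ‖b - a'‖)⁻¹ •
        ((1 / ‖c - a'‖) • c + (1 / ‖a - b'‖) • a + (1 / ‖b - a'‖) • b) := by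
      congr 1
      · ring
      · abel
    rw [heqP]; exact h

theorem inscribed_conic_perspector_exists
    (A B C A' B' C' : Pt) (hABC : AffineIndependent ℝ ![A, B, C])
    (E : Set Pt) (hE : IsEllipse E)
    (htA : TangentAt B C E A') (htB : TangentAt C A E B') (htC : TangentAt A B E C')
    (hA' : A' ∈ openSegment ℝ B C) (hB' : B' ∈ openSegment ℝ C A)
    (hC' : C' ∈ openSegment ℝ A B) :
    ∃ P : Pt, Collinear ℝ ({A, A', P} : Set Pt) ∧
      Collinear ℝ ({B, B', P} : Set Pt) ∧ Collinear ℝ ({C, C', P} : Set Pt) := by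
  obtain ⟨T, hT⟩ := hE
  have hAB : A ≠ B := by
    intro h
    have h01 : (0 : Fin 3) = 1 := hABC.injective (by simpa using h)
    exact absurd h01 (by decide)
  have hBC : B ≠ C := by
    intro h
    have h01 : (1 : Fin 3) = 2 := hABC.injective (by simpa using h)
    exact absurd h01 (by decide)
  have hCA : C ≠ A := by
    intro h
    have h01 : (2 : Fin 3) = 0 := hABC.injective (by simpa using h)
    exact absurd h01 (by decide)
  have transport : ∀ X Y p : Pt,
      (affineSpan ℝ ({X, Y} : Set Pt) : Set Pt) ∩ E = {p} →
      (affineSpan ℝ ({T.symm X, T.symm Y} : Set Pt) : Set Pt) ∩ Metric.sphere (0 : Pt) 1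
        = {T.symm p} := by
    intro X Y p hXY
    have h1 : T.symm '' ((affineSpan ℝ ({X, Y} : Set Pt) : Set Pt) ∩ E) = T.symm '' {p} :=
      congrArg _ hXY
    rw [Set.image_inter T.symm.injective, Set.image_singleton] at h1
    have h2 : T.symm '' E = Metric.sphere (0 : Pt) 1 := by
      rw [hT, ← Set.image_comp]
      simp
    have h3 : T.symm '' (affineSpan ℝ ({X, Y} : Set Pt) : Set Pt)
        = (affineSpan ℝ ({T.symm X, T.symm Y} : Set Pt) : Set Pt) := by
      have hc := AffineSubspace.coe_map (f := T.symm.toAffineMap)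
        (affineSpan ℝ ({X, Y} : Set Pt))
      rw [AffineEquiv.coe_toAffineMap] at hc
      rw [← hc, AffineSubspace.map_span]
      congr 2
      rw [Set.image_pair]
      simp
    rw [h2, h3] at h1
    exact h1
  have segtrans : ∀ X Y p : Pt, p ∈ openSegment ℝ X Y →
      T.symm p ∈ openSegment ℝ (T.symm X) (T.symm Y) := by
    intro X Y p hp
    have himg := image_openSegment ℝ T.symm.toAffineMap X Y
    have hm : T.symm p ∈ ⇑T.symm.toAffineMap '' openSegment ℝ X Y :=
      ⟨p, hp, by simp⟩
    rw [himg] at hm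
    simpa using hm
  obtain ⟨P0, m1, m2, m3⟩ := circle_case (T.symm A) (T.symm B) (T.symm C)
    (T.symm A') (T.symm B') (T.symm C')
    (fun h => hBC (T.symm.injective h)) (fun h => hCA (T.symm.injective h))
    (fun h => hAB (T.symm.injective h))
    (transport B C A' htA) (transport C A B' htB) (transport A B C' htC)
    (segtrans B C A' hA') (segtrans C A B' hB') (segtrans A B C' hC')
  refine ⟨T P0, ?_, ?_, ?_⟩
  · have h := map_line T m1
    rw [T.apply_symm_apply, T.apply_symm_apply] at h
    exact collin_of_mem _ _ _ h
  · have h := map_line T m2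
    rw [T.apply_symm_apply, T.apply_symm_apply] at h
    exact collin_of_mem _ _ _ h
  · have h := map_line T m3
    rw [T.apply_symm_apply, T.apply_symm_apply] at h
    exact collin_of_mem _ _ _ h

end
end

section
/- In a triangle ABC, the locus of midpoints of segments antiparallel to side BC (with endpoints on lines AB and AC) is contained in the A-symmedian, the reflection of the median from A in the angle bisector from A. -/
/- In a triangle ABC, the midpoint of any segment antiparallel to BC (with endpoints
on lines AB and AC) lies on the A-symmedian, the reflection of the median from A
in the internal angle bisector from A. -/

noncomputable section

/-- Reflection of the point `M` across the line through `A` with direction `w`. -/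
def reflLine (A w M : Pt) : Pt :=
  (2 : ℝ) • (A + ((inner ℝ (M - A) w : ℝ) / (inner ℝ w w : ℝ)) • w) - M

set_option maxHeartbeats 1000000 in
theorem antiparallel_midpoint_on_symmedian
    (A B C : Pt) (hABC : AffineIndependent ℝ ![A, B, C])
    (s t : ℝ) (P Q : Pt)
    (hP : P = A + s • (B - A)) (hQ : Q = A + t • (C - A))
    -- antiparallelism of `PQ` to `BC`, i.e. `AP·AB = AQ·AC` as signed lengths,
    -- equivalently `B, C, P, Q` concyclic:
    (hanti : s * ‖B - A‖ ^ 2 = t * ‖C - A‖ ^ 2) :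
    -- the reflection of the midpoint of `PQ` across the internal bisector from `A`
    -- lies on the median from `A`, i.e. the midpoint lies on the A-symmedian:
    Collinear ℝ ({A, midpoint ℝ B C,
      reflLine A (‖C - A‖ • (B - A) + ‖B - A‖ • (C - A)) (midpoint ℝ P Q)} : Set Pt) := by
  set u : Pt := B - A with hu
  set v : Pt := C - A with hv
  set b : ℝ := ‖u‖ with hb
  set c : ℝ := ‖v‖ with hc
  have hncol : ¬ Collinear ℝ ({A, B, C} : Set Pt) := by
    rw [← affineIndependent_iff_not_collinear_set]; exact hABC
  have hBA : B ≠ A := by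
    intro h
    have : (1 : Fin 3) = 0 := hABC.injective (by simpa using h)
    simp at this
  have hCA : C ≠ A := by
    intro h
    have : (2 : Fin 3) = 0 := hABC.injective (by simpa using h)
    simp at this
  have hb0 : b ≠ 0 := by simpa [hb, hu, sub_eq_zero] using hBA
  have hc0 : c ≠ 0 := by simpa [hc, hv, sub_eq_zero] using hCA
  have hcol' : ∀ r : ℝ, v = r • u → Collinear ℝ ({A, B, C} : Set Pt) := by
    intro r hr
    apply (collinear_iff_of_mem (Set.mem_insert A _)).mpr
    refine ⟨u, ?_⟩
    rintro p hp
    simp only [Set.mem_insert_iff, Set.mem_singleton_iff] at hp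
    rcases hp with rfl | rfl | rfl
    · exact ⟨0, by simp⟩
    · exact ⟨1, by rw [vadd_eq_add, one_smul, hu]; abel⟩
    · refine ⟨r, ?_⟩
      rw [vadd_eq_add, ← hr, hv]; abel
  set I : ℝ := (inner ℝ u v : ℝ) with hI
  have hD : b * c + I ≠ 0 := by
    intro h
    have hIe : (inner ℝ u (-v) : ℝ) = ‖u‖ * ‖-v‖ := by
      rw [inner_neg_right, norm_neg, ← hb, ← hc, ← hI]; linarith
    have h1 := inner_eq_norm_mul_iff_real.mp hIe
    -- h1 : ‖-v‖ • u = ‖u‖ • (-v)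
    rw [norm_neg] at h1
    have h2 : b • v = (-c) • u := by
      rw [hb, hc]
      linear_combination (norm := module) h1
    have h3 : v = (-(c / b)) • u := by
      have : v = b⁻¹ • ((-c) • u) := by
        rw [← h2, smul_smul, inv_mul_cancel₀ hb0, one_smul]
      rw [this, smul_smul]
      congr 1
      field_simp
    exact hncol (hcol' _ h3)
  set w : Pt := c • u + b • v with hw
  have huu : (inner ℝ u u : ℝ) = b ^ 2 := by rw [hb, real_inner_self_eq_norm_sq]
  have hvv : (inner ℝ v v : ℝ) = c ^ 2 := by rw [hc, real_inner_self_eq_norm_sq]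
  have hvu : (inner ℝ v u : ℝ) = I := by rw [hI, real_inner_comm]
  have hM : (midpoint ℝ P Q) = A + (1/2 : ℝ) • (s • u + t • v) := by
    rw [hP, hQ, midpoint_eq_smul_add, (by norm_num : (⅟2 : ℝ) = 1/2)]
    module
  have hin1 : (inner ℝ ((midpoint ℝ P Q) - A) w : ℝ)
      = (s * b + t * c) * (b * c + I) / 2 := by
    have hM' : (midpoint ℝ P Q) - A = (1/2 : ℝ) • (s • u + t • v) := by
      rw [hM]; abel
    rw [hM', hw]
    simp only [inner_add_left, inner_add_right, real_inner_smul_left,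
      real_inner_smul_right]
    rw [huu, hvv, hvu, ← hI]
    ring
  have hin2 : (inner ℝ w w : ℝ) = 2 * b * c * (b * c + I) := by
    rw [hw]
    simp only [inner_add_left, inner_add_right, real_inner_smul_left,
      real_inner_smul_right]
    rw [huu, hvv, hvu, ← hI]
    ring
  have hstb : s * b * b = t * c * c := by
    simp only [hb, hc] at hanti ⊢
    linear_combination hanti
  have hR : reflLine A w (midpoint ℝ P Q) = (t * c / (2 * b)) • (u + v) + A := by
    rw [reflLine, hin1, hin2, hM]
    have hcoef : (s * b + t * c) * (b * c + I) / 2 / (2 * b * c * (b * c + I))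
        = (s * b + t * c) / (4 * b * c) := by
      field_simp; ring
    rw [hcoef, hw]
    match_scalars
    · field_simp
      linear_combination (-4) * hstb
    · field_simp
      ring
    · field_simp
      linear_combination 4 * hstb
  apply (collinear_iff_of_mem (Set.mem_insert A _)).mpr
  refine ⟨u + v, ?_⟩
  rintro p hp
  simp only [Set.mem_insert_iff, Set.mem_singleton_iff] at hp
  rcases hp with rfl | rfl | rfl
  · exact ⟨0, by simp⟩
  · refine ⟨1/2, ?_⟩
    rw [vadd_eq_add, midpoint_eq_smul_add, (by norm_num : (⅟2 : ℝ) = 1/2), hu, hv]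
    module
  · refine ⟨t * c / (2 * b), ?_⟩
    rw [hR, vadd_eq_add]


end
end

section
/- In any triangle, the segment joining the midpoint of side BC to the midpoint of the altitude from A passes through the Lemoine point; likewise for the other two sides. -/
/- In any triangle, the segment joining the midpoint of side BC to the midpoint of
the altitude from A passes through the Lemoine point K = (a² : b² : c²);
likewise for the other two sides. -/

noncomputable section

/-- The point with barycentric coordinates `(x : y : z)` w.r.t. `A B C`. -/
def bary (A B C : Pt) (x y z : ℝ) : Pt := (x + y + z)⁻¹ • (x • A + y • B + z • C)

lemma bary_cycle (A B C : Pt) (x y z : ℝ) : bary B C A y z x = bary A B C x y z := by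
  unfold bary
  rw [show y + z + x = x + y + z by ring]
  module

lemma collinear_of_eq_smul (M N K : Pt) (r : ℝ) (h : K - M = r • (N - M)) :
    Collinear ℝ ({M, N, K} : Set Pt) := by
  rw [collinear_iff_of_mem (Set.mem_insert M {N, K})]
  refine ⟨N - M, ?_⟩
  rintro p (rfl | rfl | rfl)
  · exact ⟨0, by simp⟩
  · exact ⟨1, by simp⟩
  · exact ⟨r, by rw [← h]; simp⟩

lemma exists_param (B C Ah : Pt) (hBC : B ≠ C)
    (h1 : Collinear ℝ ({B, C, Ah} : Set Pt)) :
    ∃ t : ℝ, Ah = B + t • (C - B) := by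
  obtain ⟨v, hv⟩ := (collinear_iff_of_mem (Set.mem_insert B {C, Ah})).mp h1
  obtain ⟨rc, hc⟩ := hv C (by simp)
  obtain ⟨ra, hA⟩ := hv Ah (by simp)
  have hrc : rc ≠ 0 := by
    rintro rfl
    simp at hc
    exact hBC hc.symm
  refine ⟨ra / rc, ?_⟩
  have hCB : C - B = rc • v := by rw [hc]; simp
  rw [hA, hCB, smul_smul, div_mul_cancel₀ _ hrc]
  simp [add_comm]

lemma key (A B C Ah : Pt) (hBC : B ≠ C)
    (h1 : Collinear ℝ ({B, C, Ah} : Set Pt))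
    (h2 : inner ℝ (A - Ah) (C - B) = (0 : ℝ))
    (hS : dist B C ^ 2 + dist C A ^ 2 + dist A B ^ 2 ≠ 0) :
    Collinear ℝ ({midpoint ℝ B C, midpoint ℝ A Ah,
      bary A B C (dist B C ^ 2) (dist C A ^ 2) (dist A B ^ 2)} : Set Pt) := by
  obtain ⟨t, ht⟩ := exists_param B C Ah hBC h1
  set a2 := dist B C ^ 2 with ha2def
  set b2 := dist C A ^ 2 with hb2def
  set c2 := dist A B ^ 2 with hc2def
  have ha2 : a2 = inner ℝ (C - B) (C - B) := by
    rw [ha2def, dist_eq_norm, real_inner_self_eq_norm_sq, norm_sub_rev]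
  have hc2 : c2 = inner ℝ (A - B) (A - B) := by
    rw [hc2def, dist_eq_norm, real_inner_self_eq_norm_sq]
  have hp : (inner ℝ (A - B) (C - B) : ℝ) = t * a2 := by
    have hAA : A - Ah = (A - B) - t • (C - B) := by rw [ht]; abel
    rw [hAA, inner_sub_left, real_inner_smul_left, ← ha2, sub_eq_zero] at h2
    exact h2
  have hb2 : b2 = a2 + c2 - 2 * (t * a2) := by
    have hCA : C - A = (C - B) - (A - B) := by abel
    rw [hb2def, dist_eq_norm, hCA, norm_sub_sq_real,
      ← real_inner_self_eq_norm_sq, ← real_inner_self_eq_norm_sq]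
    linarith [ha2, hc2, hp, real_inner_comm (C - B) (A - B)]
  apply collinear_of_eq_smul _ _ _ (2 * a2 / (a2 + b2 + c2))
  have hmid : ∀ x y : Pt, midpoint ℝ x y = ((2:ℝ)⁻¹) • (x + y) := by
    intro x y; rw [midpoint_eq_smul_add, invOf_eq_inv]
  have hE : (a2 + b2 + c2) • (bary A B C a2 b2 c2 - midpoint ℝ B C)
      = (2 * a2) • (midpoint ℝ A Ah - midpoint ℝ B C) := by
    rw [bary, hmid, hmid, ht, smul_sub, smul_inv_smul₀ hS, hb2]
    module
  calc bary A B C a2 b2 c2 - midpoint ℝ B C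
      = ((a2 + b2 + c2)⁻¹ * (2 * a2)) • (midpoint ℝ A Ah - midpoint ℝ B C) := by
        rw [← smul_smul, ← hE, inv_smul_smul₀ hS]
    _ = (2 * a2 / (a2 + b2 + c2)) • (midpoint ℝ A Ah - midpoint ℝ B C) := by
        rw [inv_mul_eq_div]

theorem lemoine_on_side_midpoint_altitude_midpoint_lines
    (A B C Ah Bh Ch : Pt) (hABC : AffineIndependent ℝ ![A, B, C])
    -- feet of the altitudes:
    (hAh : Collinear ℝ ({B, C, Ah} : Set Pt) ∧ inner ℝ (A - Ah) (C - B) = (0 : ℝ))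
    (hBh : Collinear ℝ ({C, A, Bh} : Set Pt) ∧ inner ℝ (B - Bh) (A - C) = (0 : ℝ))
    (hCh : Collinear ℝ ({A, B, Ch} : Set Pt) ∧ inner ℝ (C - Ch) (B - A) = (0 : ℝ)) :
    Collinear ℝ ({midpoint ℝ B C, midpoint ℝ A Ah,
        bary A B C (dist B C ^ 2) (dist C A ^ 2) (dist A B ^ 2)} : Set Pt) ∧
    Collinear ℝ ({midpoint ℝ C A, midpoint ℝ B Bh,
        bary A B C (dist B C ^ 2) (dist C A ^ 2) (dist A B ^ 2)} : Set Pt) ∧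
    Collinear ℝ ({midpoint ℝ A B, midpoint ℝ C Ch,
        bary A B C (dist B C ^ 2) (dist C A ^ 2) (dist A B ^ 2)} : Set Pt) := by
  have inj := hABC.injective
  have hAB : A ≠ B := fun h => by
    have := inj (a₁ := 0) (a₂ := 1) (by simpa using h); simp at this
  have hBC : B ≠ C := fun h => by
    have := inj (a₁ := 1) (a₂ := 2) (by simpa using h); simp at this
  have hCA : C ≠ A := fun h => by
    have := inj (a₁ := 2) (a₂ := 0) (by simpa using h); simp at this
  have h1 : (0:ℝ) < dist B C := dist_pos.mpr hBC
  have h2 : (0:ℝ) < dist C A := dist_pos.mpr hCA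
  have h3 : (0:ℝ) < dist A B := dist_pos.mpr hAB
  have hS : dist B C ^ 2 + dist C A ^ 2 + dist A B ^ 2 ≠ 0 := by positivity
  refine ⟨key A B C Ah hBC hAh.1 hAh.2 hS, ?_, ?_⟩
  · have := key B C A Bh hCA hBh.1 hBh.2 (by
      rw [show dist C A ^ 2 + dist A B ^ 2 + dist B C ^ 2
        = dist B C ^ 2 + dist C A ^ 2 + dist A B ^ 2 by ring]; exact hS)
    rwa [bary_cycle] at this
  · have := key C A B Ch hAB hCh.1 hCh.2 (by
      rw [show dist A B ^ 2 + dist B C ^ 2 + dist C A ^ 2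
        = dist B C ^ 2 + dist C A ^ 2 + dist A B ^ 2 by ring]; exact hS)
    rwa [bary_cycle, bary_cycle] at this

end
end
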